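/- Let D = {x_1,...,x_n} ⊂ Z^d be finite. Then det G_D = Π_{j=1}^n G_{D∖{x_1,...,x_{j-1}}}(x_j, x_j), and in particular this product is independent of the chosen ordering of the points of D. -/

import Mathlib

def adj {d : ℕ} (x y : Fin d → ℤ) : Prop := (∑ i : Fin d, |x i - y i|) = 1

instance {d : ℕ} (x y : Fin d → ℤ) : Decidable (adj x y) := by unfold adj; infer_instance

noncomputable def killedKernel {d : ℕ} (D : Finset (Fin d → ℤ)) : Matrix D D ℝ :=
  fun x y => if adj (x : Fin d → ℤ) (y : Fin d → ℤ) then 1 / (2 * (d : ℝ)) else 0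

/-- The Green's function `G_D(x,y) = ∑_k (P_D)^k(x,y)` of simple random walk killed upon
exiting the finite set `D`, extended by `0` outside `D`. -/
noncomputable def green {d : ℕ} (D : Finset (Fin d → ℤ)) (x y : Fin d → ℤ) : ℝ :=
  if hx : x ∈ D then (if hy : y ∈ D then
    ∑' k : ℕ, ((killedKernel D) ^ k) ⟨x, hx⟩ ⟨y, hy⟩ else 0) else 0

/-!
The killed kernel `P_D` is substochastic, and from every point of `D` the walk can leave `D`
along a coordinate line, so some power of `P_D` has all row sums `< 1`. Hence the Neumann series
converges and `G_D = (I - P_D)⁻¹`. Cramer's rule gives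
`G_D(x, x) = det (I - P_{D∖{x}}) / det (I - P_D)`, that is
`det G_D = G_D(x, x) · det G_{D∖{x}}`; removing `x_1, x_2, …` one at a time gives the product.
-/

open Finset Matrix

theorem summable_pow_of_summable_pow_pow {R : Type*} [Ring R] [TopologicalSpace R]
    [IsTopologicalRing R] {x : R} {m : ℕ} [NeZero m] (h : Summable fun q : ℕ => (x ^ m) ^ q) :
    Summable fun k : ℕ => x ^ k := by
  have hres (r : ℕ) : Summable fun q : ℕ => x ^ (m * q + r) := by
    simpa only [pow_add, pow_mul] using h.mul_right (x ^ r)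
  have hsplit : (fun k : ℕ => x ^ k) =
      fun k => ∑ r : ZMod m, {k : ℕ | (k : ZMod m) = r}.indicator (fun k => x ^ k) k := by
    funext k
    simp only [Set.indicator_apply, Set.mem_ofPred_eq, sum_ite_eq, mem_univ, if_true]
  rw [hsplit]
  refine summable_sum fun r _ => ?_
  rw [← ZMod.natCast_zmod_val r]
  exact (summable_indicator_mod_iff_summable m r.val _).2 (hres r.val)

namespace Matrix

theorem mulVec_mono_of_nonneg {m n : Type*} [Fintype n] {A : Matrix m n ℝ}
    (hA : ∀ i j, 0 ≤ A i j) {v w : n → ℝ} (hvw : v ≤ w) : A *ᵥ v ≤ A *ᵥ w :=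
  fun i => sum_le_sum fun j _ => mul_le_mul_of_nonneg_left (hvw j) (hA i j)

section Substochastic

variable {ι : Type*} [Fintype ι] [DecidableEq ι] {P : Matrix ι ι ℝ}

theorem pow_mulVec_one_le_one (hP : ∀ i j, 0 ≤ P i j) (hP1 : P *ᵥ 1 ≤ 1) :
    ∀ k : ℕ, P ^ k *ᵥ 1 ≤ 1
  | 0 => by simp
  | k + 1 => by
    rw [pow_succ', ← mulVec_mulVec]
    exact (mulVec_mono_of_nonneg hP (pow_mulVec_one_le_one hP hP1 k)).trans hP1

theorem antitone_pow_mulVec_one (hP : ∀ i j, 0 ≤ P i j) (hP1 : P *ᵥ 1 ≤ 1) :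
    Antitone fun k : ℕ => P ^ k *ᵥ 1 :=
  antitone_nat_of_succ_le fun k => by
    rw [pow_succ, ← mulVec_mulVec]
    exact mulVec_mono_of_nonneg (pow_apply_nonneg hP k) hP1

theorem pow_succ_mulVec_one_lt_one (hP : ∀ i j, 0 ≤ P i j) (hP1 : P *ᵥ 1 ≤ 1) {k : ℕ}
    {i z : ι} (hiz : 0 < P i z) (hz : (P ^ k *ᵥ 1) z < 1) : (P ^ (k + 1) *ᵥ 1) i < 1 := by
  rw [pow_succ', ← mulVec_mulVec]
  calc (P *ᵥ (P ^ k *ᵥ 1)) i < (P *ᵥ 1) i :=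
        sum_lt_sum
          (fun j _ => mul_le_mul_of_nonneg_left (pow_mulVec_one_le_one hP hP1 k j) (hP i j))
          ⟨z, mem_univ z, mul_lt_mul_of_pos_left hz hiz⟩
    _ ≤ 1 := hP1 i

theorem exists_forall_pow_mulVec_one_lt_one (hP : ∀ i j, 0 ≤ P i j) (hP1 : P *ᵥ 1 ≤ 1)
    (h : ∀ i, ∃ k, (P ^ k *ᵥ 1) i < 1) : ∃ m ≠ 0, ∀ i, (P ^ m *ᵥ 1) i < 1 := by
  choose k hk using h
  refine ⟨∑ i, k i + 1, by omega, fun i => lt_of_le_of_lt ?_ (hk i)⟩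
  exact antitone_pow_mulVec_one hP hP1
    ((single_le_sum (fun j _ => Nat.zero_le (k j)) (mem_univ i)).trans (Nat.le_succ _)) i

end Substochastic

section LinftyOp

attribute [local instance] Matrix.linftyOpNormedAddCommGroup

theorem linfty_opNorm_lt_one_of_nonneg {m n : Type*} [Fintype m] [Fintype n]
    {A : Matrix m n ℝ} (hA : ∀ i j, 0 ≤ A i j) (h : ∀ i, (A *ᵥ 1) i < 1) : ‖A‖ < 1 := by
  rw [linfty_opNorm_def, ← NNReal.coe_one, NNReal.coe_lt_coe, Finset.sup_lt_iff zero_lt_one]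
  intro i _
  rw [← NNReal.coe_lt_coe, NNReal.coe_sum]
  simpa [mulVec, dotProduct, abs_of_nonneg (hA i _)] using h i

end LinftyOp

section LinftyOpRing

-- `linftyOpNormedSpace` makes the matrix ring a finite-dimensional, hence complete, normed space.
attribute [local instance] Matrix.linftyOpNormedRing Matrix.linftyOpNormedSpace

theorem summable_pow_of_substochastic {ι : Type*} [Fintype ι] [DecidableEq ι]
    {P : Matrix ι ι ℝ} (hP : ∀ i j, 0 ≤ P i j) (hP1 : P *ᵥ 1 ≤ 1)
    (h : ∀ i, ∃ k, (P ^ k *ᵥ 1) i < 1) : Summable (P ^ ·) := by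
  obtain ⟨m, hm, hlt⟩ := exists_forall_pow_mulVec_one_lt_one hP hP1 h
  have : NeZero m := ⟨hm⟩
  exact summable_pow_of_summable_pow_pow
    (summable_geometric_of_norm_lt_one
      (linfty_opNorm_lt_one_of_nonneg (pow_apply_nonneg hP m) hlt))

end LinftyOpRing

variable {ι : Type*} [Fintype ι] [DecidableEq ι]

theorem tsum_pow_eq_inv_one_sub {α : Type*} [CommRing α] [TopologicalSpace α]
    [IsTopologicalRing α] [T2Space α] {A : Matrix ι ι α} (h : Summable (A ^ ·)) :
    ∑' k, A ^ k = (1 - A)⁻¹ :=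
  (inv_eq_right_inv h.one_sub_mul_tsum_pow).symm

theorem adjugate_apply_self {α : Type*} [CommRing α] (A : Matrix ι ι α) (i : ι) :
    A.adjugate i i = (A.submatrix ((↑) : {j // j ≠ i} → ι) (↑)).det := by
  have hrow : A.updateRow i (Pi.single i 1) = of ((univ.erase i).piecewise A.row (row 1)) := by
    ext a b
    by_cases ha : a = i
    · subst ha; simp [one_apply, Pi.single_apply, eq_comm]
    · simp [ha, updateRow_ne]
  rw [adjugate_apply, hrow, det_piecewise_one_eq_submatrix_det,
    ← det_submatrix_equiv_self (Equiv.subtypeEquivRight fun j => by simp : {j // j ≠ i} ≃ _)]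
  rfl

theorem det_inv_eq_inv_apply_self_mul_det_inv_submatrix {K : Type*} [Field K] (A : Matrix ι ι K)
    (i : ι) (hminor : (A.submatrix ((↑) : {j // j ≠ i} → ι) (↑)).det ≠ 0) :
    A⁻¹.det = A⁻¹ i i * (A.submatrix ((↑) : {j // j ≠ i} → ι) (↑))⁻¹.det := by
  rw [det_nonsing_inv, det_nonsing_inv, inv_def, smul_apply, adjugate_apply_self,
    Ring.inverse_eq_inv', smul_eq_mul, mul_assoc, mul_inv_cancel₀ hminor, mul_one]

end Matrix

namespace Finset

def subtypeEraseEquiv {α : Type*} [DecidableEq α] {s : Finset α} {a : α} (ha : a ∈ s) :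
    s.erase a ≃ {x : s // x ≠ ⟨a, ha⟩} where
  toFun x := ⟨⟨x, mem_of_mem_erase x.2⟩, fun h => ne_of_mem_erase x.2 (congrArg Subtype.val h)⟩
  invFun x := ⟨x.1, mem_erase.2 ⟨fun h => x.2 (Subtype.ext h), x.1.2⟩⟩

variable {α : Type*} [DecidableEq α] {n : ℕ} {x : Fin (n + 1) → α}

theorem image_univ_erase_apply_zero (hx : Function.Injective x) :
    (univ.image x).erase (x 0) = univ.image (x ∘ Fin.succ) := by
  rw [Fin.univ_succ, cons_eq_insert, image_insert, erase_insert, map_eq_image,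
    image_image]
  · rfl
  simp [hx.eq_iff]

theorem image_univ_sdiff_image_filter_lt_succ (hx : Function.Injective x) (j : Fin n) :
    univ.image x \ (univ.filter fun m => m < j.succ).image x =
      univ.image (x ∘ Fin.succ) \ (univ.filter fun m => m < j).image (x ∘ Fin.succ) := by
  rw [← image_sdiff _ _ hx, ← image_sdiff _ _ (hx.comp (Fin.succ_injective n)), ← image_image]
  congr 1
  ext m
  cases m using Fin.cases <;> simp [Fin.succ_lt_succ_iff]

end Finset

section Lattice

variable {d : ℕ}

def unitNeighbors (x : Fin d → ℤ) : Finset (Fin d → ℤ) :=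
  (univ ×ˢ {1, -1}).image fun p : Fin d × ℤ => x + Pi.single p.1 p.2

theorem card_unitNeighbors_le (x : Fin d → ℤ) : #(unitNeighbors x) ≤ 2 * d :=
  card_image_le.trans (by simp [mul_comm])

theorem adj_add_single (x : Fin d → ℤ) (i : Fin d) : adj x (x + Pi.single i 1) := by
  simp [adj, Pi.single_apply, apply_ite (abs : ℤ → ℤ)]

theorem pos_of_adj {x y : Fin d → ℤ} (h : adj x y) : 0 < d := by
  rcases Nat.eq_zero_or_pos d with rfl | hd
  · simp [adj] at h
  · exact hd

theorem mem_unitNeighbors_of_adj {x y : Fin d → ℤ} (h : adj x y) : y ∈ unitNeighbors x := by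
  unfold adj at h
  obtain ⟨i, -, hi⟩ : ∃ i ∈ univ, |x i - y i| ≠ 0 :=
    exists_ne_zero_of_sum_ne_zero (by rw [h]; exact one_ne_zero)
  have hsplit := add_sum_erase univ (fun j => |x j - y j|) (mem_univ i)
  have hrest_nonneg : 0 ≤ ∑ j ∈ univ.erase i, |x j - y j| := sum_nonneg fun _ _ => abs_nonneg _
  have hi_one : |x i - y i| = 1 := by
    have := Int.one_le_abs (abs_ne_zero.1 hi)
    omega
  have hrest : ∑ j ∈ univ.erase i, |x j - y j| = 0 := by omega
  have heq (j : Fin d) (hj : j ≠ i) : x j = y j := by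
    have := (sum_eq_zero_iff_of_nonneg fun _ _ => abs_nonneg _).1 hrest j
      (mem_erase.2 ⟨hj, mem_univ j⟩)
    rwa [abs_eq_zero, sub_eq_zero] at this
  refine mem_image.2 ⟨(i, y i - x i), ?_, ?_⟩
  · rcases (abs_eq zero_le_one).1 hi_one with h1 | h1 <;> simp <;> omega
  · funext j
    by_cases hj : j = i
    · subst hj; simp
    · simp [hj, heq j hj]

variable {D : Finset (Fin d → ℤ)}

theorem killedKernel_nonneg (x y : D) : 0 ≤ killedKernel D x y := by
  unfold killedKernel
  split_ifs <;> positivity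

theorem killedKernel_pos_of_adj {x y : D} (h : adj (x : Fin d → ℤ) y) :
    0 < killedKernel D x y := by
  have := pos_of_adj h
  simp only [killedKernel, if_pos h]
  positivity

theorem killedKernel_mulVec_one_apply (x : D) :
    (killedKernel D *ᵥ 1) x = #{y : D | adj (x : Fin d → ℤ) y} / (2 * d) := by
  simp [killedKernel, mulVec, dotProduct, sum_ite, div_eq_mul_inv]

theorem card_filter_adj_le (x : D) :
    #{y : D | adj (x : Fin d → ℤ) y} ≤ #{y ∈ unitNeighbors (x : Fin d → ℤ) | y ∈ D} :=
  card_le_card_of_injOn Subtype.val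
    (fun y hy => mem_filter.2 ⟨mem_unitNeighbors_of_adj (mem_filter.1 hy).2, y.2⟩)
    Subtype.val_injective.injOn

theorem killedKernel_mulVec_one_le_one : killedKernel D *ᵥ 1 ≤ 1 := fun x => by
  rw [killedKernel_mulVec_one_apply]
  calc _ ≤ (2 * d : ℝ) / (2 * d) := by
        gcongr
        exact_mod_cast (card_filter_adj_le x).trans
          ((card_filter_le _ _).trans (card_unitNeighbors_le _))
    _ ≤ 1 := div_self_le_one _

theorem killedKernel_mulVec_one_lt_one_of_adj_notMem {x : D} {z : Fin d → ℤ}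
    (hxz : adj (x : Fin d → ℤ) z) (hz : z ∉ D) : (killedKernel D *ᵥ 1) x < 1 := by
  have hd := pos_of_adj hxz
  have hcard : #{y : D | adj (x : Fin d → ℤ) y} < 2 * d :=
    (card_filter_adj_le x).trans_lt <| (card_lt_card <| filter_ssubset.2
      ⟨z, mem_unitNeighbors_of_adj hxz, hz⟩).trans_le (card_unitNeighbors_le _)
  rw [killedKernel_mulVec_one_apply, div_lt_one (by positivity)]
  exact_mod_cast hcard

theorem pow_killedKernel_mulVec_one_lt_one_of_notMem (i : Fin d) :
    ∀ (t : ℕ) (x : D), (x : Fin d → ℤ) + t • Pi.single i 1 ∉ D →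
      (killedKernel D ^ t *ᵥ 1) x < 1
  | 0, x, hx => absurd (by simp) hx
  | t + 1, x, hx => by
    by_cases hz : (x : Fin d → ℤ) + Pi.single i 1 ∈ D
    · refine pow_succ_mulVec_one_lt_one killedKernel_nonneg killedKernel_mulVec_one_le_one
        (z := ⟨_, hz⟩) (killedKernel_pos_of_adj (adj_add_single _ i))
        (pow_killedKernel_mulVec_one_lt_one_of_notMem i t _ ?_)
      simpa [add_smul, add_assoc, add_comm] using hx
    · calc (killedKernel D ^ (t + 1) *ᵥ 1) x ≤ (killedKernel D ^ 1 *ᵥ 1) x :=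
            antitone_pow_mulVec_one killedKernel_nonneg killedKernel_mulVec_one_le_one
              (by omega) x
        _ < 1 := by
            rw [pow_one]
            exact killedKernel_mulVec_one_lt_one_of_adj_notMem (adj_add_single _ i) hz

theorem exists_pow_killedKernel_mulVec_one_lt_one (i : Fin d) (x : D) :
    ∃ k, (killedKernel D ^ k *ᵥ 1) x < 1 := by
  have hinj : Function.Injective fun t : ℕ => (x : Fin d → ℤ) + t • Pi.single i 1 := by
    intro s t hst
    simpa using congrFun hst i
  obtain ⟨-, ⟨t, rfl⟩, ht⟩ := (Set.infinite_range_of_injective hinj).exists_notMem_finset D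
  exact ⟨t, pow_killedKernel_mulVec_one_lt_one_of_notMem i t x ht⟩

end Lattice

section Green

variable {d : ℕ} {D : Finset (Fin d → ℤ)}

theorem summable_pow_killedKernel (hd : 1 ≤ d) (D : Finset (Fin d → ℤ)) :
    Summable (killedKernel D ^ ·) :=
  summable_pow_of_substochastic killedKernel_nonneg killedKernel_mulVec_one_le_one
    (exists_pow_killedKernel_mulVec_one_lt_one ⟨0, hd⟩)

theorem green_eq_inv_one_sub_killedKernel (hd : 1 ≤ d) (x y : D) :
    green D x y = (1 - killedKernel D)⁻¹ x y := by
  have h := summable_pow_killedKernel hd D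
  rw [green, dif_pos x.2, dif_pos y.2, ← tsum_pow_eq_inv_one_sub h]
  exact (Pi.hasSum.1 (Pi.hasSum.1 h.hasSum x) y).tsum_eq

theorem det_one_sub_killedKernel_ne_zero (hd : 1 ≤ d) (D : Finset (Fin d → ℤ)) :
    (1 - killedKernel D).det ≠ 0 :=
  (isUnit_det_of_right_inverse (summable_pow_killedKernel hd D).one_sub_mul_tsum_pow).ne_zero

theorem submatrix_one_sub_killedKernel_erase {e : Fin d → ℤ} (he : e ∈ D) :
    ((1 - killedKernel D).submatrix ((↑) : {y : D // y ≠ ⟨e, he⟩} → D) (↑)).submatrix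
      (subtypeEraseEquiv he) (subtypeEraseEquiv he) = 1 - killedKernel (D.erase e) := by
  ext a b
  simp only [submatrix_apply, Matrix.sub_apply, subtypeEraseEquiv, Equiv.coe_fn_mk]
  congr 1
  simp only [one_apply, Subtype.ext_iff]

theorem det_green_eq_green_mul_det_green_erase (hd : 1 ≤ d) {e : Fin d → ℤ} (he : e ∈ D) :
    (of fun x y : D => green D x y).det =
      green D e e * (of fun x y : D.erase e => green (D.erase e) x y).det := by
  have hG (D : Finset (Fin d → ℤ)) : of (fun x y : D => green D x y) = (1 - killedKernel D)⁻¹ :=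
    ext (green_eq_inv_one_sub_killedKernel hd)
  have hsub := submatrix_one_sub_killedKernel_erase he
  rw [hG, hG, det_inv_eq_inv_apply_self_mul_det_inv_submatrix _ ⟨e, he⟩, ← hsub,
    inv_submatrix_equiv, det_submatrix_equiv_self,
    ← green_eq_inv_one_sub_killedKernel hd ⟨e, he⟩]
  rw [← det_submatrix_equiv_self (subtypeEraseEquiv he), hsub]
  exact det_one_sub_killedKernel_ne_zero hd _

end Green

/-- if `D = {x_1, …, x_n} ⊂ ℤ^d` (the `x_j` distinct), then
`det G_D = ∏_{j=1}^n G_{D∖{x_1,…,x_{j-1}}}(x_j, x_j)`.  (Since the left-hand side does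
not depend on the ordering of the points, neither does the right-hand side.) -/
theorem det_green_product (d : ℕ) (hd : 1 ≤ d) (n : ℕ)
    (x : Fin n → (Fin d → ℤ)) (hinj : Function.Injective x)
    (D : Finset (Fin d → ℤ)) (hD : D = Finset.image x Finset.univ) :
    (Matrix.of fun i j : D => green D (i : Fin d → ℤ) (j : Fin d → ℤ)).det =
      ∏ j : Fin n,
        green (D \ Finset.image x (Finset.univ.filter fun m => m < j)) (x j) (x j) := by
  induction n generalizing D with
  | zero =>
    subst hD
    rw [Fin.prod_univ_zero, univ_eq_empty, image_empty]
    exact det_isEmpty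
  | succ n ih =>
    subst hD
    rw [det_green_eq_green_mul_det_green_erase hd (mem_image_of_mem x (mem_univ 0)),
      image_univ_erase_apply_zero hinj, ih _ (hinj.comp (Fin.succ_injective n)) _ rfl,
      Fin.prod_univ_succ]
    simp only [Function.comp_apply, image_univ_sdiff_image_filter_lt_succ hinj]
    congr 1
    simp
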